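/- For integers m,n ≥ 0, real p, b > 0, and real ζ, one has G_ξ^{m,n,m+n+1}(b,ζ) = Σ_{i=0}^n C(n,i) · ζ^{m+i+1} ξ^{n-i} / (m+i+1), where G_ξ^{m,n,k}(x,y) := (1/k!) d^k/dt^k |_{t=0} ∫_0^{x+ty} s^m (1+tξ+s)^n ds evaluated at k = m+n+1. -/

import Mathlib

/-!
Expanding `(1 + tξ + s)^n` binomially in `s` and integrating term by term shows that
`∫_0^{b+tζ} s^m (1+tξ+s)^n ds = ∑ᵢ C(n,i)/(m+i+1) · (1+ξt)^{n-i} (b+ζt)^{m+i+1}`,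
a polynomial in `t` each of whose terms has degree `m+n+1` with leading coefficient
`C(n,i)/(m+i+1) · ξ^{n-i} ζ^{m+i+1}`. The `k`-th Taylor coefficient at `0` of a polynomial
is its `k`-th coefficient.
-/

/-- The Fang–Lai polynomial G_ξ^{m,n,k}(x,y), defined as the k-th Taylor
coefficient in t at t = 0 of ∫_0^{x+ty} s^m (1+tξ+s)^n ds. -/
noncomputable def G (m n k : ℕ) (ξ x y : ℝ) : ℝ :=
  iteratedDeriv k (fun t => ∫ s in (0:ℝ)..(x + t * y), s ^ m * (1 + t * ξ + s) ^ n) 0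
    / (Nat.factorial k : ℝ)

open Polynomial Finset

namespace Polynomial

theorem iteratedDeriv_eval {𝕜 : Type*} [NontriviallyNormedField 𝕜] (p : 𝕜[X]) (k : ℕ) :
    iteratedDeriv k (fun x => p.eval x) = fun x => (derivative^[k] p).eval x := by
  induction k with
  | zero => simp
  | succ k ih =>
    ext x
    rw [iteratedDeriv_succ, ih, Function.iterate_succ_apply', Polynomial.deriv]

theorem iteratedDeriv_eval_zero {𝕜 : Type*} [NontriviallyNormedField 𝕜] (p : 𝕜[X]) (k : ℕ) :
    iteratedDeriv k (fun x => p.eval x) 0 = (k.factorial : 𝕜) * p.coeff k := by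
  rw [iteratedDeriv_eval]
  simp only [← coeff_zero_eq_eval_zero, coeff_iterate_derivative, zero_add,
    Nat.descFactorial_self, nsmul_eq_mul]

theorem coeff_linear_pow_mul_linear_pow {R : Type*} [CommSemiring R] (a b c d : R) (N M : ℕ) :
    ((C a * X + C b) ^ N * (C c * X + C d) ^ M).coeff (N + M) = a ^ N * c ^ M := by
  have coeff_linear_pow (a b : R) (N : ℕ) : ((C a * X + C b) ^ N).coeff N = a ^ N := by
    simpa using coeff_pow_of_natDegree_le (m := N) (natDegree_linear_le (a := a) (b := b))
  have natDegree_linear_pow_le (a b : R) (N : ℕ) : ((C a * X + C b) ^ N).natDegree ≤ N := by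
    simpa using natDegree_pow_le_of_le N (natDegree_linear_le (a := a) (b := b))
  rw [coeff_mul_add_eq_of_natDegree_le (natDegree_linear_pow_le a b N)
    (natDegree_linear_pow_le c d M), coeff_linear_pow, coeff_linear_pow]

end Polynomial

theorem integral_pow_mul_add_pow (m n : ℕ) (c x : ℝ) :
    ∫ s in (0:ℝ)..x, s ^ m * (c + s) ^ n
      = ∑ i ∈ range (n + 1), (n.choose i : ℝ) * c ^ (n - i) * (x ^ (m + i + 1) / (m + i + 1)) := by
  have binomial (s : ℝ) : s ^ m * (c + s) ^ n
      = ∑ i ∈ range (n + 1), (n.choose i : ℝ) * c ^ (n - i) * s ^ (m + i) := by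
    rw [add_comm c, add_pow, mul_sum]
    exact sum_congr rfl fun i _ => by ring
  simp_rw [binomial]
  rw [intervalIntegral.integral_finsetSum fun i _ =>
    (by fun_prop : Continuous _).intervalIntegrable _ _]
  refine sum_congr rfl fun i _ => ?_
  rw [intervalIntegral.integral_const_mul, integral_pow]
  push_cast
  ring

noncomputable def integralPoly (m n : ℕ) (ξ b ζ : ℝ) : ℝ[X] :=
  ∑ i ∈ range (n + 1), C ((n.choose i : ℝ) / (m + i + 1)) *
    ((C ξ * X + C 1) ^ (n - i) * (C ζ * X + C b) ^ (m + i + 1))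

theorem eval_integralPoly (m n : ℕ) (ξ b ζ t : ℝ) :
    (integralPoly m n ξ b ζ).eval t = ∫ s in (0:ℝ)..(b + t * ζ), s ^ m * (1 + t * ξ + s) ^ n := by
  rw [integral_pow_mul_add_pow, integralPoly, eval_finsetSum]
  refine sum_congr rfl fun i _ => ?_
  simp only [eval_mul, eval_add, eval_C, eval_X, eval_pow]
  ring

theorem coeff_integralPoly_top (m n : ℕ) (ξ b ζ : ℝ) :
    (integralPoly m n ξ b ζ).coeff (m + n + 1)
      = ∑ i ∈ range (n + 1), (n.choose i : ℝ) * ζ ^ (m + i + 1) * ξ ^ (n - i) / (m + i + 1) := by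
  rw [integralPoly, finsetSum_coeff]
  refine sum_congr rfl fun i hi => ?_
  have hdeg : m + n + 1 = (n - i) + (m + i + 1) := by
    have := mem_range.1 hi
    omega
  rw [coeff_C_mul, hdeg, coeff_linear_pow_mul_linear_pow]
  ring

theorem G_top_degree_formula_general (m n : ℕ) (ξ b ζ : ℝ) :
    G m n (m + n + 1) ξ b ζ
      = ∑ i ∈ Finset.range (n + 1),
          (n.choose i : ℝ) * ζ ^ (m + i + 1) * ξ ^ (n - i) / (m + i + 1 : ℝ) := by
  have hpoly : (fun t => ∫ s in (0:ℝ)..(b + t * ζ), s ^ m * (1 + t * ξ + s) ^ n)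
      = fun t => (integralPoly m n ξ b ζ).eval t :=
    funext fun t => (eval_integralPoly m n ξ b ζ t).symm
  rw [G, hpoly, iteratedDeriv_eval_zero, mul_div_cancel_left₀ _ (by positivity),
    coeff_integralPoly_top]

/-- Explicit formula for G_ξ^{m,n,m+n+1}(b,ζ). -/
theorem G_top_degree_formula (m n : ℕ) (ξ b ζ : ℝ) (hb : 0 < b) :
    G m n (m + n + 1) ξ b ζ
      = ∑ i ∈ Finset.range (n + 1),
          (n.choose i : ℝ) * ζ ^ (m + i + 1) * ξ ^ (n - i) / (m + i + 1 : ℝ) :=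
  G_top_degree_formula_general m n ξ b ζ
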